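/- Soundness of Regression: let P = ⟨A,O,I,G⟩ be a planning problem and c a regression solution of P. Then c is also a progression solution of P, i.e., ⊥ ∉ Φ*(c,σ_I) and Φ*(c,σ_I) ⊆ ext(δ_G). -/

import Mathlib

open scoped Classical

/-! ## States -/

/-- A state: a pair of finite sets of fluents (true ones and false ones).
Used for both a-states (when the two sets are disjoint, see `St.OK`) and
p-states (partial states). -/
structure St (V : Type*) where
  T : Finset V
  F : Finset V
deriving DecidableEq

variable {V : Type*} [DecidableEq V]

/-- A pair of sets of fluents is a genuine (a- or p-) state when the sets are disjoint. -/
def St.OK (s : St V) : Prop := Disjoint s.T s.F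

/-- The extension set `ext(δ)` of a p-state `δ`: all a-states extending it. -/
def exts (δ : St V) : Set (St V) := {σ | σ.OK ∧ δ.T ⊆ σ.T ∧ δ.F ⊆ σ.F}

/-- `δ'` is a partial extension of `δ`. -/
def pext (δ δ' : St V) : Prop := δ.T ⊆ δ'.T ∧ δ.F ⊆ δ'.F

/-! ## Actions -/

/-- A non-sensing action: precondition literals (positive part `preP`, negative part
`preN`), and disjoint add and delete lists. -/
structure NAct (V : Type*) where
  preP : Finset V
  preN : Finset V
  add : Finset V
  del : Finset V
  hdisj : Disjoint add del

/-- A sensing action: precondition literals and a set of sensed fluents not occurring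
in the precondition. -/
structure SAct (V : Type*) where
  preP : Finset V
  preN : Finset V
  sens : Finset V
  hsens : Disjoint sens (preP ∪ preN)

/-- Executability of a non-sensing action in an a-state. -/
def NAct.execIn (a : NAct V) (σ : St V) : Prop := a.preP ⊆ σ.T ∧ a.preN ⊆ σ.F

/-- Executability of a sensing action in an a-state. -/
def SAct.execIn (a : SAct V) (σ : St V) : Prop := a.preP ⊆ σ.T ∧ a.preN ⊆ σ.F

/-- The result of executing a non-sensing action `a` in an a-state `σ`. -/
def NAct.res (a : NAct V) (σ : St V) : St V :=
  ⟨σ.T \ a.del ∪ a.add, σ.F \ a.add ∪ a.del⟩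

/-- The transition function `Φ` for a non-sensing action (`none` plays the role of `⊥`). -/
def PhiN (a : NAct V) (σ : St V) : Set (Option (St V)) :=
  {x | (a.execIn σ ∧ x = some (a.res σ)) ∨ (¬ a.execIn σ ∧ x = none)}

/-- The possible results of executing a sensing action `a` in an a-state `σ`. -/
def sres (a : SAct V) (σ : St V) : Set (St V) :=
  {σ' | σ'.OK ∧ σ.T ⊆ σ'.T ∧ σ.F ⊆ σ'.F ∧
    (σ'.T \ σ.T) ∪ (σ'.F \ σ.F) = a.sens \ (σ.T ∪ σ.F)}

/-- The transition function `Φ` for a sensing action (`none` plays the role of `⊥`). -/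
def PhiS (a : SAct V) (σ : St V) : Set (Option (St V)) :=
  {x | (a.execIn σ ∧ ∃ σ' ∈ sres a σ, x = some σ') ∨ (¬ a.execIn σ ∧ x = none)}

/-! ## Regression for single actions -/

/-- Applicability of a non-sensing action `a` in a p-state `δ`. -/
def AppN (a : NAct V) (δ : St V) : Prop :=
  ((a.add ∩ δ.T).Nonempty ∨ (a.del ∩ δ.F).Nonempty) ∧
  Disjoint a.add δ.F ∧ Disjoint a.del δ.T ∧
  a.preP ∩ δ.F ⊆ a.del ∧ a.preN ∩ δ.T ⊆ a.add

/-- Regression of a non-sensing action over a p-state (`none` is `⊥`). -/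
noncomputable def RegressN (a : NAct V) (δ : St V) : Option (St V) :=
  if AppN a δ then some ⟨δ.T \ a.add ∪ a.preP, δ.F \ a.del ∪ a.preN⟩ else none

/-- `X` is a sensed set of the set `Δ` of (distinct) p-states with respect to the sensing
action `a`, i.e. `X` is a nonempty subset of `Sens_a` and `Δ` is proper with respect to `X`. -/
def SensedSet (a : SAct V) (Δ : Finset (St V)) (X : Finset V) : Prop :=
  X.Nonempty ∧ X ⊆ a.sens ∧
  (∀ δ ∈ Δ, a.sens ⊆ δ.T ∪ δ.F) ∧
  Δ.card = 2 ^ X.card ∧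
  (∀ P Q : Finset V, Disjoint P Q → P ∪ Q = X →
    ∃! δ, δ ∈ Δ ∧ δ.T ∩ X = P ∧ δ.F ∩ X = Q) ∧
  (∀ δ ∈ Δ, ∀ δ' ∈ Δ, δ ≠ δ' → δ.T \ X = δ'.T \ X ∧ δ.F \ X = δ'.F \ X)

/-- Strong applicability of a sensing action in a set of p-states. -/
def StrongApp (a : SAct V) (Δ : Finset (St V)) : Prop :=
  (∃ X, SensedSet a Δ X) ∧ ∀ δ ∈ Δ, Disjoint a.preP δ.F ∧ Disjoint a.preN δ.T

/-- Applicability of a sensing action in a set of p-states: some family of partial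
extensions of the members of `Δ` makes `a` strongly applicable, and `Sens_a` is known
in every member of `Δ`. -/
def AppS (a : SAct V) (Δ : Finset (St V)) : Prop :=
  (∃ e : St V → St V, (∀ δ ∈ Δ, pext δ (e δ)) ∧ Set.InjOn e ↑Δ ∧ StrongApp a (Δ.image e)) ∧
  (∀ δ ∈ Δ, a.sens ⊆ δ.T ∪ δ.F)

/-- `S_{a,Δ}`: the sensed set of a family of partial extensions of `Δ`
(well-defined by the "unique sensed set" lemma). -/
noncomputable def SaD (a : SAct V) (Δ : Finset (St V)) : Finset V :=
  if h : ∃ X, ∃ e : St V → St V, (∀ δ ∈ Δ, pext δ (e δ)) ∧ Set.InjOn e ↑Δ ∧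
      SensedSet a (Δ.image e) X
  then h.choose else ∅

/-- Regression of a sensing action over a set of p-states (`none` is `⊥`). -/
noncomputable def RegressS (a : SAct V) (Δ : Finset (St V)) : Option (St V) :=
  if AppS a Δ then
    some ⟨(Δ.sup St.T) \ SaD a Δ ∪ a.preP, (Δ.sup St.F) \ SaD a Δ ∪ a.preN⟩
  else none

/-! ## Formulas (conjunctions of fluent literals) -/

/-- A conjunction of fluent literals, given by its positive and negative fluents. -/
abbrev Form (V : Type*) := Finset V × Finset V

/-- A conjunction of literals is consistent if no fluent occurs both positively and
negatively. -/
def Consistent (φ : Form V) : Prop := Disjoint φ.1 φ.2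

/-- Two conjunctions of literals are mutually exclusive. -/
def MutEx (φ ψ : Form V) : Prop := ¬ Disjoint φ.1 ψ.2 ∨ ¬ Disjoint ψ.1 φ.2

/-- A conjunction of literals holds in an a-state. -/
def holds (φ : Form V) (σ : St V) : Prop := φ.1 ⊆ σ.T ∧ φ.2 ⊆ σ.F

/-- `BIN S`: all binary representations of the nonempty set of fluents `S`. -/
def BIN (S : Finset V) : Finset (Form V) :=
  S.powerset.image (fun P => (P, S \ P))

/-- The set of conjunctions `χ` spans over the set of fluents `S`. -/
def spans (χ : Finset (Form V)) (S : Finset V) : Prop :=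
  ∃ φ : Form V, Consistent φ ∧ φ ∉ χ ∧ Disjoint S (φ.1 ∪ φ.2) ∧
    χ = (BIN S).image (fun ψ => (φ.1 ∪ ψ.1, φ.2 ∪ ψ.2))

/-! ## Conditional plans -/

/-- Conditional plans. -/
inductive Plan (V : Type*) where
  | empty : Plan V
  | action : NAct V → Plan V
  | pcase : SAct V → List (Form V × Plan V) → Plan V
  | seq : Plan V → Plan V → Plan V

/-- Well-formedness of a conditional plan: in every case plan the guards are
consistent and pairwise mutually exclusive conjunctions of literals. -/
inductive Plan.WF : Plan V → Prop
  | empty : Plan.WF .empty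
  | action (a : NAct V) : Plan.WF (.action a)
  | pcase (a : SAct V) (bs : List (Form V × Plan V)) :
      (∀ b ∈ bs, Consistent b.1) →
      bs.Pairwise (fun b b' => MutEx b.1 b'.1) →
      (∀ b ∈ bs, Plan.WF b.2) → Plan.WF (.pcase a bs)
  | seq {c₁ c₂ : Plan V} : Plan.WF c₁ → Plan.WF c₂ → Plan.WF (.seq c₁ c₂)

/-- The graph of the extended transition function `Φ*`:
`PhiStarR c x y` means `y ∈ Φ*(c, x)` (where `none` is `⊥`). -/
inductive PhiStarR : Plan V → Option (St V) → Option (St V) → Prop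
  | bot (c : Plan V) : PhiStarR c none none
  | empty (σ : St V) : PhiStarR .empty (some σ) (some σ)
  | action (a : NAct V) (σ : St V) (x : Option (St V)) :
      x ∈ PhiN a σ → PhiStarR (.action a) (some σ) x
  | caseBot (a : SAct V) (bs : List (Form V × Plan V)) (σ : St V) :
      none ∈ PhiS a σ → PhiStarR (.pcase a bs) (some σ) none
  | caseHit (a : SAct V) (bs : List (Form V × Plan V)) (σ σ' : St V)
      (φ : Form V) (p : Plan V) (x : Option (St V)) :
      some σ' ∈ PhiS a σ → (φ, p) ∈ bs → holds φ σ' →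
      PhiStarR p (some σ') x → PhiStarR (.pcase a bs) (some σ) x
  | caseMiss (a : SAct V) (bs : List (Form V × Plan V)) (σ σ' : St V) :
      some σ' ∈ PhiS a σ → (∀ b ∈ bs, ¬ holds b.1 σ') →
      PhiStarR (.pcase a bs) (some σ) none
  | seq (c₁ c₂ : Plan V) (σ : St V) (y x : Option (St V)) :
      PhiStarR c₁ (some σ) y → PhiStarR c₂ y x → PhiStarR (.seq c₁ c₂) (some σ) x

/-- `R(cᵢ,δ)` from the definition of `Regress*` on case plans (the consistent case). -/
def Rform (φ : Form V) (st : St V) : St V := ⟨st.T ∪ φ.1, st.F ∪ φ.2⟩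

/-- The graph of the extended regression function `Regress*`:
`RegStarR c x y` means `Regress*(c, x) = y` (where `none` is `⊥`). -/
inductive RegStarR : Plan V → Option (St V) → Option (St V) → Prop
  | bot (c : Plan V) : RegStarR c none none
  | empty (δ : St V) : RegStarR .empty (some δ) (some δ)
  | action (a : NAct V) (δ : St V) : RegStarR (.action a) (some δ) (RegressN a δ)
  | caseBot (a : SAct V) (bs : List (Form V × Plan V)) (δ : St V)
      (b : Form V × Plan V) :
      b ∈ bs → RegStarR b.2 (some δ) none → RegStarR (.pcase a bs) (some δ) none
  | caseRBot (a : SAct V) (bs : List (Form V × Plan V)) (δ : St V)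
      (b : Form V × Plan V) (st : St V) :
      b ∈ bs → RegStarR b.2 (some δ) (some st) →
      ¬ (Disjoint b.1.1 st.F ∧ Disjoint b.1.2 st.T) →
      RegStarR (.pcase a bs) (some δ) none
  | caseGo (a : SAct V) (bs : List (Form V × Plan V)) (δ : St V)
      (r : Form V × Plan V → St V) :
      (∀ b ∈ bs, RegStarR b.2 (some δ) (some (r b))) →
      (∀ b ∈ bs, Disjoint b.1.1 (r b).F ∧ Disjoint b.1.2 (r b).T) →
      RegStarR (.pcase a bs) (some δ)
        (RegressS a ((bs.map (fun b => Rform b.1 (r b))).toFinset))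
  | seq (c₁ c₂ : Plan V) (δ : St V) (y x : Option (St V)) :
      RegStarR c₂ (some δ) y → RegStarR c₁ y x → RegStarR (.seq c₁ c₂) (some δ) x

/-! ## Subplans, redundancy, regressability -/

/-- One editing step producing a "smaller" plan: removing an instance of a
non-sensing action, removing a case plan or one of its branches, or replacing a
sensing action by a sub sensing action; possibly deep inside the plan. -/
inductive Edit : Plan V → Plan V → Prop
  | dropAct (a : NAct V) : Edit (.action a) .empty
  | dropCase (a : SAct V) (bs : List (Form V × Plan V)) : Edit (.pcase a bs) .empty
  | dropBranch (a : SAct V) (b : Form V × Plan V) (l₁ l₂ : List (Form V × Plan V)) :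
      Edit (.pcase a (l₁ ++ b :: l₂)) (.pcase a (l₁ ++ l₂))
  | subSense (a a' : SAct V) (bs : List (Form V × Plan V)) :
      a'.preP = a.preP → a'.preN = a.preN → a'.sens ⊂ a.sens →
      Edit (.pcase a bs) (.pcase a' bs)
  | inBranch (a : SAct V) (φ : Form V) (p p' : Plan V) (l₁ l₂ : List (Form V × Plan V)) :
      Edit p p' →
      Edit (.pcase a (l₁ ++ (φ, p) :: l₂)) (.pcase a (l₁ ++ (φ, p') :: l₂))
  | seqL {c₁ c₁' : Plan V} (c₂ : Plan V) : Edit c₁ c₁' → Edit (.seq c₁ c₂) (.seq c₁' c₂)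
  | seqR {c₂ c₂' : Plan V} (c₁ : Plan V) : Edit c₂ c₂' → Edit (.seq c₁ c₂) (.seq c₁ c₂')

/-- `c'` is a subplan of `c`. -/
def IsSubplan (c' c : Plan V) : Prop := Relation.TransGen Edit c c'

/-- `⊥ ∉ Φ*(c,σ)` and `Φ*(c,σ) ⊆ ext(δ)`. -/
def Achieves (c : Plan V) (σ δ : St V) : Prop :=
  ∀ x, PhiStarR c (some σ) x → ∃ σ' ∈ exts δ, x = some σ'

/-- `c` is redundant with respect to `(σ,δ)`. -/
def Redundant (c : Plan V) (σ δ : St V) : Prop :=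
  Achieves c σ δ ∧ ∃ c', IsSubplan c' c ∧ Achieves c' σ δ

/-- A case plan `a;case(φ₁→c₁,…,φₙ→cₙ)` is possibly regressable. -/
def PRCase (a : SAct V) (bs : List (Form V × Plan V)) : Prop :=
  (∃ S : Finset V, S.Nonempty ∧ S ⊆ a.sens ∧ spans (bs.map Prod.fst).toFinset S) ∧
  ∀ b ∈ bs, a.sens ⊆ b.1.1 ∪ b.1.2

/-- Every case plan occurring in `c` is possibly regressable. -/
inductive AllCasesPR : Plan V → Prop
  | empty : AllCasesPR .empty
  | action (a : NAct V) : AllCasesPR (.action a)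
  | pcase (a : SAct V) (bs : List (Form V × Plan V)) :
      PRCase a bs → (∀ b ∈ bs, AllCasesPR b.2) → AllCasesPR (.pcase a bs)
  | seq {c₁ c₂ : Plan V} : AllCasesPR c₁ → AllCasesPR c₂ → AllCasesPR (.seq c₁ c₂)

/-- `c` is regressable with respect to `(σ,δ)`. -/
def Regressable (c : Plan V) (σ δ : St V) : Prop :=
  AllCasesPR c ∧ Achieves c σ δ ∧ ¬ Redundant c σ δ

/-! ## Normalized plans -/

/-- Normalized conditional plans: a sequence of non-sensing actions followed by
either nothing or a case plan all of whose branches are normalized. -/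
inductive Normalized : Plan V → Prop
  | empty : Normalized .empty
  | single (a : NAct V) : Normalized (.action a)
  | pcase (a : SAct V) (bs : List (Form V × Plan V)) :
      (∀ b ∈ bs, Normalized b.2) → Normalized (.pcase a bs)
  | cons (a : NAct V) {c : Plan V} : Normalized c → Normalized (.seq (.action a) c)

/-- `normSeq c k` normalizes the plan `c ; k`, assuming `k` is already normalized. -/
def normSeq : Plan V → Plan V → Plan V
  | .empty, k => k
  | .action a, k => .seq (.action a) k
  | .pcase a bs, k => .pcase a (bs.attach.map (fun b => (b.1.1, normSeq b.1.2 k)))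
  | .seq c₁ c₂, k => normSeq c₁ (normSeq c₂ k)
termination_by c _ => sizeOf c
decreasing_by
  all_goals simp_wf
  all_goals first
    | omega
    | (have h := List.sizeOf_lt_of_mem b.2
       obtain ⟨⟨f, p⟩, hb⟩ := b
       simp at *
       omega)

/-- `normalized(c)`. -/
def normalizePlan (c : Plan V) : Plan V := normSeq c .empty

/-! ## Sequences of non-sensing actions -/

/-- The conditional plan `a₁;…;aₙ;k` determined by a list of non-sensing actions. -/
def seqP : List (NAct V) → Plan V → Plan V
  | [], k => k
  | a :: t, k => .seq (.action a) (seqP t k)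

instance (a : NAct V) (σ : St V) : Decidable (a.execIn σ) :=
  inferInstanceAs (Decidable (a.preP ⊆ σ.T ∧ a.preN ⊆ σ.F))

/-- `Φ*` specialized to a sequence of non-sensing actions, as a function
(`none` is `⊥`). -/
def runSeq : List (NAct V) → St V → Option (St V)
  | [], σ => some σ
  | a :: t, σ => if a.execIn σ then runSeq t (a.res σ) else none

/-- `Regress*` specialized to a sequence of non-sensing actions, as a function
(`none` is `⊥`). -/
noncomputable def regSeq : List (NAct V) → St V → Option (St V)
  | [], δ => some δ
  | a :: t, δ => match regSeq t δ with
      | none => none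
      | some δ' => RegressN a δ'

/-- For a sequence of non-sensing actions: `⊥ ∉ Φ*(l,σ)` and `Φ*(l,σ) ⊆ ext(δ)`. -/
def SeqAchieves (l : List (NAct V)) (σ δ : St V) : Prop :=
  ∃ σ', runSeq l σ = some σ' ∧ σ' ∈ exts δ

/-- Redundancy of a sequence of non-sensing actions with respect to `(σ,δ)`
(a subplan of a sequence is a proper sublist of it). -/
def SeqRedundant (l : List (NAct V)) (σ δ : St V) : Prop :=
  SeqAchieves l σ δ ∧ ∃ l', List.Sublist l' l ∧ l' ≠ l ∧ SeqAchieves l' σ δ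

/-- Regressability of a sequence of non-sensing actions with respect to `(σ,δ)`. -/
def SeqRegressable (l : List (NAct V)) (σ δ : St V) : Prop :=
  SeqAchieves l σ δ ∧ ¬ SeqRedundant l σ δ

/-! ## The regression search algorithm -/

/-- The sets of plan-state pairs reachable by the algorithm `Solve(P)` from the
initial set `{⟨[], δ_G⟩}` using steps 4.1 (non-sensing regression) and 4.2
(sensing regression). -/
inductive Reach (δG : St V) : Set (Plan V × St V) → Prop
  | init : Reach δG {(Plan.empty, δG)}
  | step1 {N : Set (Plan V × St V)} (c : Plan V) (δ : St V) (a : NAct V) (δ' : St V) :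
      Reach δG N → (c, δ) ∈ N → RegressN a δ = some δ' →
      (∀ p ∈ N, p.2 ≠ δ') →
      Reach δG (insert (Plan.seq (.action a) c, δ') N)
  | step2 {N : Set (Plan V × St V)} (a : SAct V) (bs : List (Form V × Plan V))
      (ds : Form V × Plan V → St V) (S : Finset V) (δ' : St V) :
      Reach δG N →
      (∀ b ∈ bs, (b.2, ds b) ∈ N) →
      S.Nonempty → S ⊆ a.sens → spans (bs.map Prod.fst).toFinset S →
      (∀ b ∈ bs, (Rform b.1 (ds b)).OK) →
      RegressS a ((bs.map (fun b => Rform b.1 (ds b))).toFinset) = some δ' →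
      (∀ p ∈ N, p.2 ≠ δ') →
      Reach δG (insert (Plan.pcase a bs, δ') N)

/-- `N` is saturated: no step of type 4.1 or 4.2 can produce a p-state not
already occurring in `N`. -/
def Saturated (N : Set (Plan V × St V)) : Prop :=
  (∀ (c : Plan V) (δ : St V) (a : NAct V) (δ' : St V),
      (c, δ) ∈ N → RegressN a δ = some δ' → ∃ p ∈ N, p.2 = δ') ∧
  (∀ (a : SAct V) (bs : List (Form V × Plan V)) (ds : Form V × Plan V → St V)
      (S : Finset V) (δ' : St V),
      (∀ b ∈ bs, (b.2, ds b) ∈ N) →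
      S.Nonempty → S ⊆ a.sens → spans (bs.map Prod.fst).toFinset S →
      (∀ b ∈ bs, (Rform b.1 (ds b)).OK) →
      RegressS a ((bs.map (fun b => Rform b.1 (ds b))).toFinset) = some δ' →
      ∃ p ∈ N, p.2 = δ')

/-! Every a-state extending `Regress(a, δ)` makes `a` executable and leads into `ext(δ)`.
For a sensing action, an outcome `σ'` agrees on the sensed set `S_{a,Δ}` with some member of `Δ`
(properness of the partial extensions), and off `S_{a,Δ}` it contains every member of `Δ`
(inherited from the regressed state), so `σ'` extends that member `R(cᵢ, δ)`. Hence `φᵢ` holds in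
`σ'`, mutual exclusion makes `cᵢ` the branch taken, and induction on `Regress*` concludes. -/

open Finset

theorem some_mem_phiS {a : SAct V} {σ σ' : St V} :
    some σ' ∈ PhiS a σ ↔ a.execIn σ ∧ σ' ∈ sres a σ := by
  simp [PhiS]

theorem none_mem_phiS {a : SAct V} {σ : St V} : none ∈ PhiS a σ ↔ ¬ a.execIn σ := by
  simp [PhiS]

theorem sens_subset_of_mem_sres {a : SAct V} {σ σ' : St V} (h : σ' ∈ sres a σ) :
    a.sens ⊆ σ'.T ∪ σ'.F := by
  obtain ⟨-, hT, hF, hnew⟩ := h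
  intro f hf
  by_cases hold : f ∈ σ.T ∪ σ.F
  · exact union_subset_union hT hF hold
  · have : f ∈ (σ'.T \ σ.T) ∪ (σ'.F \ σ.F) := hnew ▸ mem_sdiff.2 ⟨hf, hold⟩
    exact union_subset_union sdiff_subset sdiff_subset this

omit [DecidableEq V] in
theorem MutEx.not_holds {φ ψ : Form V} {σ : St V} (h : MutEx φ ψ) (hσ : σ.OK)
    (hφ : holds φ σ) (hψ : holds ψ σ) : False := by
  rcases h with h | h
  · exact h (hσ.mono hφ.1 hψ.2)
  · exact h (hσ.mono hψ.1 hφ.2)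

theorem Achieves.seq {c₁ c₂ : Plan V} {σ δ δG : St V} (h₁ : Achieves c₁ σ δ)
    (h₂ : ∀ σ' ∈ exts δ, Achieves c₂ σ' δG) : Achieves (.seq c₁ c₂) σ δG := by
  intro x hx
  cases hx with
  | seq _ _ _ y _ hy hx =>
    obtain ⟨σ', hσ', rfl⟩ := h₁ y hy
    exact h₂ σ' hσ' x hx

theorem achieves_action {a : NAct V} {σ δG : St V} (hexec : a.execIn σ)
    (hres : a.res σ ∈ exts δG) : Achieves (.action a) σ δG := by
  intro x hx
  cases hx with
  | action _ _ _ hx =>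
    rcases hx with ⟨-, rfl⟩ | ⟨hnexec, -⟩
    · exact ⟨_, hres, rfl⟩
    · exact absurd hexec hnexec

theorem achieves_pcase {a : SAct V} {bs : List (Form V × Plan V)} {σ δG : St V}
    (hexec : a.execIn σ)
    (hbranch : ∀ σ' ∈ sres a σ,
      (∃ b ∈ bs, holds b.1 σ') ∧ ∀ b ∈ bs, holds b.1 σ' → Achieves b.2 σ' δG) :
    Achieves (.pcase a bs) σ δG := by
  intro x hx
  cases hx with
  | caseBot _ _ _ h => exact absurd hexec (none_mem_phiS.1 h)
  | caseHit _ _ _ σ' φ p _ hσ' hb hφ hp =>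
    exact (hbranch σ' (some_mem_phiS.1 hσ').2).2 (φ, p) hb hφ x hp
  | caseMiss _ _ _ σ' hσ' hmiss =>
    obtain ⟨b, hb, hφ⟩ := (hbranch σ' (some_mem_phiS.1 hσ').2).1
    exact absurd hφ (hmiss b hb)

theorem subset_of_inter_eq_of_sdiff_subset {s s' t X : Finset V} (hs : s ⊆ s')
    (hX : s' ∩ X = t ∩ X) (hsd : s \ X ⊆ t) : s ⊆ t := by
  rw [← sdiff_union_inter s X]
  exact union_subset hsd ((inter_subset_inter_right hs).trans (hX ▸ inter_subset_left))

theorem RegressN.execIn_and_res_mem_exts {a : NAct V} {δ δ' σ : St V}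
    (h : RegressN a δ = some δ') (hσ : σ ∈ exts δ') : a.execIn σ ∧ a.res σ ∈ exts δ := by
  unfold RegressN at h
  split_ifs at h with hA
  cases h
  obtain ⟨hOK, hT, hF⟩ := hσ
  obtain ⟨-, hAF, hDT, -, -⟩ := hA
  refine ⟨⟨subset_union_right.trans hT, subset_union_right.trans hF⟩, ?_, ?_, ?_⟩
  · have := a.hdisj
    simp only [St.OK, NAct.res, disjoint_left, mem_union, mem_sdiff] at hOK this ⊢
    grind
  · intro f hf
    have := @hT f
    simp only [NAct.res, mem_union, mem_sdiff] at this ⊢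
    grind [disjoint_left]
  · intro f hf
    have := @hF f
    simp only [NAct.res, mem_union, mem_sdiff] at this ⊢
    grind [disjoint_left]

theorem SensedSet.exists_inter_eq {a : SAct V} {Δ : Finset (St V)} {X : Finset V}
    (hX : SensedSet a Δ X) {σ : St V} (hσ : σ.OK) (hknown : a.sens ⊆ σ.T ∪ σ.F) :
    ∃ d ∈ Δ, d.T ∩ X = σ.T ∩ X ∧ d.F ∩ X = σ.F ∩ X := by
  obtain ⟨-, hXsens, -, -, hproper, -⟩ := hX
  have hcover : σ.T ∩ X ∪ σ.F ∩ X = X := by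
    rw [← union_inter_distrib_right, inter_eq_right]
    exact hXsens.trans hknown
  obtain ⟨d, ⟨hd, hT, hF⟩, -⟩ :=
    hproper _ _ (hσ.mono inter_subset_left inter_subset_left) hcover
  exact ⟨d, hd, hT, hF⟩

theorem AppS.sensedSet_saD {a : SAct V} {Δ : Finset (St V)} (h : AppS a Δ) :
    ∃ e : St V → St V, (∀ δ ∈ Δ, pext δ (e δ)) ∧ SensedSet a (Δ.image e) (SaD a Δ) := by
  obtain ⟨⟨e, hpe, hinj, ⟨X, hX⟩, -⟩, -⟩ := h
  have hex : ∃ X, ∃ e : St V → St V, (∀ δ ∈ Δ, pext δ (e δ)) ∧ Set.InjOn e ↑Δ ∧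
      SensedSet a (Δ.image e) X := ⟨X, e, hpe, hinj, hX⟩
  rw [SaD, dif_pos hex]
  obtain ⟨e', hpe', -, hX'⟩ := hex.choose_spec
  exact ⟨e', hpe', hX'⟩

theorem RegressS.execIn_and_exists_mem_exts {a : SAct V} {Δ : Finset (St V)} {δ' σ : St V}
    (h : RegressS a Δ = some δ') (hσ : σ ∈ exts δ') :
    a.execIn σ ∧ ∀ σ' ∈ sres a σ, ∃ d ∈ Δ, σ' ∈ exts d := by
  unfold RegressS at h
  split_ifs at h with hApp
  cases h
  obtain ⟨e, hpe, hX⟩ := hApp.sensedSet_saD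
  obtain ⟨-, hT, hF⟩ := hσ
  refine ⟨⟨subset_union_right.trans hT, subset_union_right.trans hF⟩, fun σ' hσ' => ?_⟩
  have hknown := sens_subset_of_mem_sres hσ'
  obtain ⟨hOK', hTσ', hFσ', -⟩ := hσ'
  obtain ⟨_, hd', hXT, hXF⟩ := hX.exists_inter_eq hOK' hknown
  obtain ⟨d, hd, rfl⟩ := mem_image.1 hd'
  refine ⟨d, hd, hOK', ?_, ?_⟩
  · refine subset_of_inter_eq_of_sdiff_subset (hpe d hd).1 hXT ?_
    exact (sdiff_subset_sdiff (le_sup (f := St.T) hd) le_rfl).trans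
      ((subset_union_left.trans hT).trans hTσ')
  · refine subset_of_inter_eq_of_sdiff_subset (hpe d hd).2 hXF ?_
    exact (sdiff_subset_sdiff (le_sup (f := St.F) hd) le_rfl).trans
      ((subset_union_left.trans hF).trans hFσ')

theorem RegStarR.achieves {c : Plan V} {i o : Option (St V)} (h : RegStarR c i o)
    (hwf : c.WF) : ∀ δG ∈ i, ∀ δ ∈ o, ∀ σ ∈ exts δ, Achieves c σ δG := by
  induction h with
  | bot | caseBot | caseRBot => simp
  | empty δ =>
    rintro _ ⟨⟩ _ ⟨⟩ σ hσ x hx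
    cases hx
    exact ⟨σ, hσ, rfl⟩
  | action a δ =>
    rintro _ ⟨⟩ δ' hδ' σ hσ
    obtain ⟨hexec, hres⟩ := RegressN.execIn_and_res_mem_exts hδ' hσ
    exact achieves_action hexec hres
  | caseGo a bs δ r _ _ ih =>
    rintro _ ⟨⟩ δ' hδ' σ hσ
    obtain ⟨hexec, hout⟩ := RegressS.execIn_and_exists_mem_exts hδ' hσ
    cases hwf with
    | pcase _ _ _ hpair hwfb =>
      refine achieves_pcase hexec fun σ' hσ' => ?_
      obtain ⟨_, hd, hσ'd⟩ := hout σ' hσ'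
      obtain ⟨b, hb, rfl⟩ := List.mem_map.1 (List.mem_toFinset.1 hd)
      obtain ⟨hOK, hT, hF⟩ := hσ'd
      have hbσ' : holds b.1 σ' := ⟨subset_union_right.trans hT, subset_union_right.trans hF⟩
      refine ⟨⟨b, hb, hbσ'⟩, fun b' hb' hb'σ' => ?_⟩
      obtain rfl : b' = b := by
        by_contra hne
        have : Std.Symm fun b b' : Form V × Plan V => MutEx b.1 b'.1 := ⟨fun _ _ h => h.symm⟩
        exact (hpair.forall hb' hb hne).not_holds hOK hb'σ' hbσ'
      exact ih b' hb' (hwfb b' hb') δ rfl _ rfl σ'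
        ⟨hOK, subset_union_left.trans hT, subset_union_left.trans hF⟩
  | seq c₁ c₂ δ y x _ _ ih₂ ih₁ =>
    cases hwf with
    | seq hwf₁ hwf₂ =>
      rintro _ ⟨⟩ δ' hδ' σ hσ
      cases y with
      | none =>
        cases ‹RegStarR c₁ none x›
        cases hδ'
      | some δm => exact (ih₁ hwf₁ δm rfl δ' hδ' σ hσ).seq (ih₂ hwf₂ δ rfl δm rfl)

theorem regression_soundness_general
    (σI δG : St V)
    (c : Plan V) (hwf : c.WF)
    (δ : St V) (hreg : RegStarR c (some δG) (some δ)) (hin : σI ∈ exts δ) :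
    ¬ PhiStarR c (some σI) none ∧
    ∀ x, PhiStarR c (some σI) x → ∃ σ' ∈ exts δG, x = some σ' := by
  have hach : Achieves c σI δG := hreg.achieves hwf δG rfl δ rfl σI hin
  refine ⟨fun hbot => ?_, hach⟩
  obtain ⟨_, -, hnone⟩ := hach none hbot
  cases hnone

/-- soundness of regression.  A regression solution (a conditional
plan `c` with `Regress*(c,δ_G) = δ ≠ ⊥` and `σ_I ∈ ext(δ)`) is a progression
solution: `⊥ ∉ Φ*(c,σ_I)` and `Φ*(c,σ_I) ⊆ ext(δ_G)`. -/
theorem regression_soundness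
    (σI δG : St V) (hI : σI.OK) (hG : δG.OK)
    (c : Plan V) (hwf : c.WF)
    (δ : St V) (hreg : RegStarR c (some δG) (some δ)) (hin : σI ∈ exts δ) :
    ¬ PhiStarR c (some σI) none ∧
    ∀ x, PhiStarR c (some σI) x → ∃ σ' ∈ exts δG, x = some σ' :=
  regression_soundness_general σI δG c hwf δ hreg hin
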